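/- Let n ≥ 1, μ > 0, and let g : ℝⁿ → ℝ be a bounded continuous function. Define u(x,t) = ∫_{ℝⁿ} Φ_μ(x − y, t) g(y) dy for x ∈ ℝⁿ and t > 0. Then (i) for every x ∈ ℝⁿ and t > 0, ∂_t u(x,t) = μ Δu(x,t), and (ii) for every x ∈ ℝⁿ, u(x,t) → g(x) as t → 0⁺. -/

import Mathlib

open Real MeasureTheory Filter

/-- The Laplacian in the space variable, i.e. the sum of the second partial
derivatives `∑_{j=1}^n ∂²/∂x_j²`. -/
noncomputable def laplacianR (n : ℕ) (f : EuclideanSpace ℝ (Fin n) → ℝ)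
    (x : EuclideanSpace ℝ (Fin n)) : ℝ :=
  ∑ j : Fin n, iteratedDeriv 2 (fun s : ℝ => f (x + s • EuclideanSpace.single j (1 : ℝ))) 0

/-- The heat kernel `Φ_μ(x,t) = (4πμt)^{−n/2} exp(−|x|²/(4μt))`. -/
noncomputable def heatKernel (μ : ℝ) (n : ℕ) (x : EuclideanSpace ℝ (Fin n)) (t : ℝ) : ℝ :=
  (4 * Real.pi * μ * t) ^ (-(n : ℝ) / 2) * Real.exp (-‖x‖ ^ 2 / (4 * μ * t))

namespace HeatAux

variable {n : ℕ}


lemma integrable_gauss {b : ℝ} (hb : 0 < b) :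
    Integrable (fun z : EuclideanSpace ℝ (Fin n) => rexp (-b * ‖z‖ ^ 2)) := by
  have h := GaussianFourier.integrable_cexp_neg_mul_sq_norm_add (V := EuclideanSpace ℝ (Fin n))
    (b := (b : ℂ)) (by simpa using hb) 0 0
  have h2 := h.re
  refine h2.congr (Filter.Eventually.of_forall fun v => ?_)
  have : (-(b:ℂ) * (‖v‖:ℂ) ^ 2 + 0 * (inner ℝ (0 : EuclideanSpace ℝ (Fin n)) v : ℝ))
      = ((-b * ‖v‖^2 : ℝ) : ℂ) := by push_cast; ring
  simp only [this, RCLike.re_to_complex, Complex.exp_ofReal_re]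

lemma integral_gauss {b : ℝ} (hb : 0 < b) :
    ∫ z : EuclideanSpace ℝ (Fin n), rexp (-b * ‖z‖ ^ 2) = (π / b) ^ ((n : ℝ) / 2) := by
  rw [GaussianFourier.integral_rexp_neg_mul_sq_norm hb]
  norm_num [finrank_euclideanSpace_fin]

lemma integrable_gauss_poly {b : ℝ} (hb : 0 < b) :
    Integrable (fun z : EuclideanSpace ℝ (Fin n) => (1 + ‖z‖) ^ 2 * rexp (-b * ‖z‖ ^ 2)) := by
  refine (((integrable_gauss (half_pos hb)).const_mul (2 + 4 / b)).mono'
    (Continuous.aestronglyMeasurable (by fun_prop)) (Filter.Eventually.of_forall fun z => ?_))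
  have hr : (0:ℝ) ≤ ‖z‖ := norm_nonneg z
  rw [Real.norm_eq_abs, abs_of_nonneg (by positivity)]
  have key : (1 + ‖z‖) ^ 2 ≤ (2 + 4 / b) * rexp (b / 2 * ‖z‖ ^ 2) := by
    have h1 : b / 2 * ‖z‖ ^ 2 ≤ rexp (b / 2 * ‖z‖ ^ 2) := (Real.add_one_le_exp _).trans'
      (by linarith)
    have h2 : (1:ℝ) ≤ rexp (b / 2 * ‖z‖ ^ 2) := Real.one_le_exp (by positivity)
    have h4 : 0 < 4 / b := by positivity
    have h3 : 4 / b * (b / 2 * ‖z‖ ^ 2) = 2 * ‖z‖ ^ 2 := by field_simp; ring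
    nlinarith [sq_nonneg (1 - ‖z‖), mul_le_mul_of_nonneg_left h1 (le_of_lt h4)]
  calc (1 + ‖z‖) ^ 2 * rexp (-b * ‖z‖ ^ 2)
      ≤ ((2 + 4 / b) * rexp (b / 2 * ‖z‖ ^ 2)) * rexp (-b * ‖z‖ ^ 2) := by
        exact mul_le_mul_of_nonneg_right key (Real.exp_nonneg _)
    _ = (2 + 4 / b) * rexp (-(b / 2) * ‖z‖ ^ 2) := by
        rw [mul_assoc, ← Real.exp_add]; ring_nf

lemma integrable_master_bound {a : ℝ} (ha : 0 < a) (M : ℝ) (x : EuclideanSpace ℝ (Fin n)) :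
    Integrable (fun y : EuclideanSpace ℝ (Fin n) =>
      M * ((1 + ‖x - y‖) ^ 2 * rexp (-a * ‖x - y‖ ^ 2))) :=
  ((integrable_gauss_poly ha).const_mul M).comp_sub_left x

lemma integrable_master {f : EuclideanSpace ℝ (Fin n) → ℝ}
    (hf : AEStronglyMeasurable f (volume : Measure (EuclideanSpace ℝ (Fin n))))
    {a M : ℝ} (ha : 0 < a) (x : EuclideanSpace ℝ (Fin n))
    (h : ∀ y, |f y| ≤ M * ((1 + ‖x - y‖) ^ 2 * rexp (-a * ‖x - y‖ ^ 2))) :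
    Integrable f := by
  refine (integrable_master_bound ha M x).mono' hf (Filter.Eventually.of_forall fun y => ?_)
  simpa [Real.norm_eq_abs] using h y



lemma heatKernel_eq (mu : ℝ) (z : EuclideanSpace ℝ (Fin n)) (t : ℝ) :
    heatKernel mu n z t
      = (4 * π * mu * t) ^ (-(n : ℝ) / 2) * rexp (-(1 / (4 * mu * t)) * ‖z‖ ^ 2) := by
  unfold heatKernel
  congr 1
  ring_nf

lemma abs_apply_le_norm (w : EuclideanSpace ℝ (Fin n)) (j : Fin n) : |w j| ≤ ‖w‖ := by
  rw [EuclideanSpace.norm_eq]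
  calc |w j| = Real.sqrt (‖w j‖ ^ 2) := by
        rw [Real.sqrt_sq_eq_abs]; simp [Real.norm_eq_abs]
    _ ≤ _ := Real.sqrt_le_sqrt <| Finset.single_le_sum
        (f := fun i => ‖w i‖ ^ 2) (fun i _ => sq_nonneg _) (Finset.mem_univ j)

lemma norm_sq_eq_sum (w : EuclideanSpace ℝ (Fin n)) : ‖w‖ ^ 2 = ∑ j, (w j) ^ 2 := by
  rw [EuclideanSpace.norm_eq, Real.sq_sqrt (by positivity)]
  simp [Real.norm_eq_abs, sq_abs]

lemma apply_add_smul_single (w : EuclideanSpace ℝ (Fin n)) (j : Fin n) (s : ℝ) :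
    (w + s • EuclideanSpace.single j (1 : ℝ)) j = w j + s := by
  simp [EuclideanSpace.single_apply]

lemma norm_add_smul_single_sq (w : EuclideanSpace ℝ (Fin n)) (j : Fin n) (s : ℝ) :
    ‖w + s • EuclideanSpace.single j (1 : ℝ)‖ ^ 2 = ‖w‖ ^ 2 + 2 * (w j) * s + s ^ 2 := by
  rw [norm_add_sq_real]
  have h1 : (inner ℝ w (s • EuclideanSpace.single j (1 : ℝ)) : ℝ) = s * w j := by
    rw [real_inner_smul_right, EuclideanSpace.inner_single_right]
    simp
  have h2 : ‖s • EuclideanSpace.single j (1 : ℝ)‖ ^ 2 = s ^ 2 := by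
    rw [norm_smul]; simp [mul_pow, sq_abs]
  rw [h1, h2]; ring

lemma norm_add_smul_single_le (w : EuclideanSpace ℝ (Fin n)) (j : Fin n) {s S : ℝ}
    (hs : |s| ≤ S) : ‖w + s • EuclideanSpace.single j (1 : ℝ)‖ ≤ ‖w‖ + S := by
  refine (norm_add_le _ _).trans ?_
  have : ‖s • EuclideanSpace.single j (1 : ℝ)‖ = |s| := by
    rw [norm_smul]; simp [Real.norm_eq_abs]
  linarith

lemma norm_le_add_smul_single (w : EuclideanSpace ℝ (Fin n)) (j : Fin n) {s S : ℝ}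
    (hs : |s| ≤ S) : ‖w‖ ≤ ‖w + s • EuclideanSpace.single j (1 : ℝ)‖ + S := by
  have h := norm_sub_le (w + s • EuclideanSpace.single j (1 : ℝ))
    (s • EuclideanSpace.single j (1 : ℝ))
  simp only [add_sub_cancel_right] at h
  have : ‖s • EuclideanSpace.single j (1 : ℝ)‖ = |s| := by
    rw [norm_smul]; simp [Real.norm_eq_abs]
  linarith

lemma exp_shift_bound {b : ℝ} (hb : 0 ≤ b) (z : EuclideanSpace ℝ (Fin n)) (j : Fin n)
    {s S : ℝ} (hs : |s| ≤ S) :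
    rexp (-b * ‖z + s • EuclideanSpace.single j (1 : ℝ)‖ ^ 2)
      ≤ rexp (b * S ^ 2) * rexp (-(b / 2) * ‖z‖ ^ 2) := by
  rw [← Real.exp_add]
  apply Real.exp_le_exp.2
  have h := norm_le_add_smul_single z j hs
  have h0 := norm_nonneg (z + s • EuclideanSpace.single j (1 : ℝ))
  have h1 := norm_nonneg z
  have hS : 0 ≤ S := (abs_nonneg s).trans hs
  have hz2 : ‖z‖ ^ 2 ≤ 2 * ‖z + s • EuclideanSpace.single j (1 : ℝ)‖ ^ 2 + 2 * S ^ 2 := by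
    nlinarith [sq_nonneg (‖z + s • EuclideanSpace.single j (1 : ℝ)‖ - S)]
  nlinarith [mul_le_mul_of_nonneg_left hz2 hb]

/-- First spatial derivative of the heat kernel in a coordinate direction. -/
lemma hasDerivAt_heatKernel_dir {mu t : ℝ} (hmu : 0 < mu) (ht : 0 < t)
    (w : EuclideanSpace ℝ (Fin n)) (j : Fin n) (s : ℝ) :
    HasDerivAt (fun s' : ℝ => heatKernel mu n (w + s' • EuclideanSpace.single j (1 : ℝ)) t)
      (-2 * (1 / (4 * mu * t)) * ((w + s • EuclideanSpace.single j (1 : ℝ)) j)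
        * heatKernel mu n (w + s • EuclideanSpace.single j (1 : ℝ)) t) s := by
  set b : ℝ := 1 / (4 * mu * t) with hbdef
  set c : ℝ := (4 * π * mu * t) ^ (-(n : ℝ) / 2) with hcdef
  have key : ∀ s' : ℝ, heatKernel mu n (w + s' • EuclideanSpace.single j (1 : ℝ)) t
      = c * rexp (-b * (‖w‖ ^ 2 + 2 * (w j) * s' + s' ^ 2)) := fun s' => by
    rw [heatKernel_eq, norm_add_smul_single_sq]
  simp only [key, apply_add_smul_single]
  have hp : HasDerivAt (fun s' : ℝ => ‖w‖ ^ 2 + 2 * (w j) * s' + s' ^ 2)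
      (2 * (w j) + 2 * s) s := by
    have h1 : HasDerivAt (fun s' : ℝ => s' ^ 2) (2 * s) s := by
      simpa using hasDerivAt_pow 2 s
    have h2 : HasDerivAt (fun s' : ℝ => ‖w‖ ^ 2 + 2 * (w j) * s') (2 * (w j)) s := by
      simpa using ((hasDerivAt_id s).const_mul (2 * (w j))).const_add (‖w‖ ^ 2)
    exact h2.add h1
  have h3 := ((hp.const_mul (-b)).exp).const_mul c
  exact h3.congr_deriv (by ring)

/-- Second spatial derivative of the heat kernel in a coordinate direction. -/
lemma hasDerivAt_heatKernel_dir2 {mu t : ℝ} (hmu : 0 < mu) (ht : 0 < t)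
    (w : EuclideanSpace ℝ (Fin n)) (j : Fin n) (s : ℝ) :
    HasDerivAt (fun s' : ℝ => -2 * (1 / (4 * mu * t))
        * ((w + s' • EuclideanSpace.single j (1 : ℝ)) j)
        * heatKernel mu n (w + s' • EuclideanSpace.single j (1 : ℝ)) t)
      ((4 * (1 / (4 * mu * t)) ^ 2 * ((w + s • EuclideanSpace.single j (1 : ℝ)) j) ^ 2
          - 2 * (1 / (4 * mu * t)))
        * heatKernel mu n (w + s • EuclideanSpace.single j (1 : ℝ)) t) s := by
  set b : ℝ := 1 / (4 * mu * t) with hbdef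
  simp only [apply_add_smul_single]
  have h1 : HasDerivAt (fun s' : ℝ => -2 * b * (w j + s')) (-2 * b) s := by
    simpa using ((hasDerivAt_id s).const_add (w j)).const_mul (-2 * b)
  have h2 := hasDerivAt_heatKernel_dir (n := n) hmu ht w j s
  simp only [apply_add_smul_single] at h2
  have h3 := h1.mul h2
  exact h3.congr_deriv (by ring)



lemma hasDerivAt_heatKernel_time {mu : ℝ} (hmu : 0 < mu) (z : EuclideanSpace ℝ (Fin n))
    {t : ℝ} (ht : 0 < t) :
    HasDerivAt (fun t' : ℝ => heatKernel mu n z t')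
      ((-(n : ℝ) / 2 / t + ‖z‖ ^ 2 / (4 * mu * t ^ 2)) * heatKernel mu n z t) t := by
  have h4 : 0 < 4 * π * mu * t := by positivity
  have hinner : HasDerivAt (fun t' : ℝ => 4 * π * mu * t') (4 * π * mu) t := by
    simpa using (hasDerivAt_id t).const_mul (4 * π * mu)
  have f1 : HasDerivAt (fun t' : ℝ => (4 * π * mu * t') ^ (-(n : ℝ) / 2))
      ((-(n : ℝ) / 2) * (4 * π * mu * t) ^ (-(n : ℝ) / 2 - 1) * (4 * π * mu)) t :=
    (Real.hasDerivAt_rpow_const (Or.inl h4.ne')).comp t hinner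
  have hexpfun : ∀ t' : ℝ, -‖z‖ ^ 2 / (4 * mu * t') = -‖z‖ ^ 2 / (4 * mu) * t'⁻¹ := by
    intro t'; ring
  have f2' : HasDerivAt (fun t' : ℝ => -‖z‖ ^ 2 / (4 * mu) * t'⁻¹)
      (-‖z‖ ^ 2 / (4 * mu) * (-(t ^ 2)⁻¹)) t := (hasDerivAt_inv ht.ne').const_mul _
  have f2 : HasDerivAt (fun t' : ℝ => rexp (-‖z‖ ^ 2 / (4 * mu * t')))
      (rexp (-‖z‖ ^ 2 / (4 * mu * t)) * (-‖z‖ ^ 2 / (4 * mu) * (-(t ^ 2)⁻¹))) t := by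
    simp only [hexpfun]
    exact f2'.exp
  have h := f1.mul f2
  have hr : (4 * π * mu * t) ^ (-(n : ℝ) / 2 - 1)
      = (4 * π * mu * t) ^ (-(n : ℝ) / 2) / (4 * π * mu * t) :=
    Real.rpow_sub_one h4.ne' _
  unfold heatKernel
  refine h.congr_deriv ?_
  rw [hr]
  have hπ : (π : ℝ) ≠ 0 := Real.pi_ne_zero
  field_simp



lemma heatKernel_continuous (mu : ℝ) (t : ℝ) :
    Continuous fun z : EuclideanSpace ℝ (Fin n) => heatKernel mu n z t := by
  unfold heatKernel
  exact continuous_const.mul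
    (Real.continuous_exp.comp (((continuous_norm.pow 2).neg).div_const _))

lemma heatKernel_nonneg {mu t : ℝ} (hmu : 0 < mu) (ht : 0 < t)
    (z : EuclideanSpace ℝ (Fin n)) : 0 ≤ heatKernel mu n z t := by
  unfold heatKernel
  have : (0:ℝ) < 4 * π * mu * t := by positivity
  positivity

section Main

variable {mu t : ℝ} (hmu : 0 < mu) (ht : 0 < t) {g : EuclideanSpace ℝ (Fin n) → ℝ}
  (hg_cont : Continuous g) {C : ℝ} (hC0 : 0 ≤ C) (hC : ∀ y, |g y| ≤ C)

include hmu ht hg_cont hC0 hC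

/-- Integrability of the basic integrand. -/
lemma integrable_F (v : EuclideanSpace ℝ (Fin n)) :
    Integrable (fun y => heatKernel mu n (v - y) t * g y) := by
  have hb : (0:ℝ) < 1 / (4 * mu * t) := by positivity
  have hc : (0:ℝ) < (4 * π * mu * t) ^ (-(n : ℝ) / 2) :=
    Real.rpow_pos_of_pos (by positivity) _
  refine integrable_master (M := (4 * π * mu * t) ^ (-(n : ℝ) / 2) * C)
    ((((heatKernel_continuous mu t).comp (continuous_const.sub continuous_id)).mul
      hg_cont).aestronglyMeasurable) hb v (fun y => ?_)
  rw [heatKernel_eq]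
  set r := ‖v - y‖
  have h1 : (1:ℝ) ≤ (1 + r) ^ 2 := by nlinarith [norm_nonneg (v - y)]
  have he : (0:ℝ) ≤ rexp (-(1 / (4 * mu * t)) * r ^ 2) := Real.exp_nonneg _
  calc |(4 * π * mu * t) ^ (-(n : ℝ) / 2) * rexp (-(1 / (4 * mu * t)) * r ^ 2) * g y|
      = (4 * π * mu * t) ^ (-(n : ℝ) / 2) * rexp (-(1 / (4 * mu * t)) * r ^ 2) * |g y| := by
        rw [abs_mul, abs_of_nonneg (by positivity)]
    _ ≤ (4 * π * mu * t) ^ (-(n : ℝ) / 2) * rexp (-(1 / (4 * mu * t)) * r ^ 2) * C := by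
        gcongr; exact hC y
    _ ≤ ((4 * π * mu * t) ^ (-(n : ℝ) / 2) * C) * ((1 + r) ^ 2 * rexp (-(1 / (4 * mu * t)) * r ^ 2)) := by
        nlinarith [mul_nonneg (mul_nonneg hc.le hC0) he]

set_option maxHeartbeats 1000000 in
/-- First differentiation under the integral sign, in a coordinate direction. -/
lemma hasDerivAt_int_dir (x : EuclideanSpace ℝ (Fin n)) (j : Fin n) (s₀ : ℝ) :
    HasDerivAt
      (fun s : ℝ => ∫ y, heatKernel mu n (x + s • EuclideanSpace.single j (1:ℝ) - y) t * g y)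
      (∫ y, (-2 * (1 / (4 * mu * t)) * ((x + s₀ • EuclideanSpace.single j (1:ℝ) - y) j)
          * heatKernel mu n (x + s₀ • EuclideanSpace.single j (1:ℝ) - y) t) * g y) s₀ := by
  have hb : (0:ℝ) < 1 / (4 * mu * t) := by positivity
  set b : ℝ := 1 / (4 * mu * t) with hbdef
  have hc : (0:ℝ) < (4 * π * mu * t) ^ (-(n : ℝ) / 2) :=
    Real.rpow_pos_of_pos (by positivity) _
  set c : ℝ := (4 * π * mu * t) ^ (-(n : ℝ) / 2) with hcdef
  set S : ℝ := |s₀| + 1 with hSdef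
  have hS : 0 ≤ S := by positivity
  have contF' : ∀ s : ℝ, Continuous fun y : EuclideanSpace ℝ (Fin n) =>
      (-2 * b * ((x + s • EuclideanSpace.single j (1:ℝ) - y) j)
        * heatKernel mu n (x + s • EuclideanSpace.single j (1:ℝ) - y) t) * g y := by
    intro s
    refine Continuous.mul (Continuous.mul (Continuous.mul continuous_const ?_) ?_) hg_cont
    · exact (EuclideanSpace.proj j).continuous.comp (continuous_const.sub continuous_id)
    · exact (heatKernel_continuous mu t).comp (continuous_const.sub continuous_id)
  refine (hasDerivAt_integral_of_dominated_loc_of_deriv_le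
    (F := fun (s : ℝ) (y : EuclideanSpace ℝ (Fin n)) =>
      heatKernel mu n (x + s • EuclideanSpace.single j (1:ℝ) - y) t * g y)
    (F' := fun (s : ℝ) (y : EuclideanSpace ℝ (Fin n)) =>
      (-2 * b * ((x + s • EuclideanSpace.single j (1:ℝ) - y) j)
          * heatKernel mu n (x + s • EuclideanSpace.single j (1:ℝ) - y) t) * g y)
    (bound := fun y => (2*b*c*C*(1+S)*rexp (b*S^2))
      * ((1 + ‖x - y‖) ^ 2 * rexp (-((1/(4*mu*t))/2) * ‖x - y‖ ^ 2)))
    (Metric.ball_mem_nhds s₀ one_pos)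
    (Filter.Eventually.of_forall (fun s => ?_)) (integrable_F hmu ht hg_cont hC0 hC _)
    (contF' s₀).aestronglyMeasurable
    (Filter.Eventually.of_forall (fun y => fun s hs => ?_))
    (integrable_master_bound (half_pos hb) (2*b*c*C*(1+S)*rexp (b*S^2)) x)
    (Filter.Eventually.of_forall (fun y => fun s _ => ?_))).2
  · exact (((heatKernel_continuous mu t).comp (continuous_const.sub continuous_id)).mul
      hg_cont).aestronglyMeasurable
  · -- the bound
    have hsS : |s| ≤ S := by
      have := Metric.mem_ball.1 hs
      rw [Real.dist_eq] at this
      have h2 := abs_sub_abs_le_abs_sub s s₀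
      rw [hSdef]; linarith
    have hrw : x + s • EuclideanSpace.single j (1:ℝ) - y
        = (x - y) + s • EuclideanSpace.single j (1:ℝ) := by abel
    set z := x - y with hzdef
    set w := z + s • EuclideanSpace.single j (1:ℝ) with hwdef
    beta_reduce
    rw [Real.norm_eq_abs, hrw, heatKernel_eq]
    have h1 : |w j| ≤ ‖z‖ + S := (abs_apply_le_norm w j).trans (norm_add_smul_single_le z j hsS)
    have h2 : rexp (-(1/(4*mu*t)) * ‖w‖^2) ≤ rexp (b*S^2) * rexp (-(b/2) * ‖z‖^2) := by
      rw [← hbdef]; exact exp_shift_bound hb.le z j hsS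
    have h3 : |g y| ≤ C := hC y
    have key : |(-2 * b * (w j) * (c * rexp (-(1/(4*mu*t)) * ‖w‖^2))) * g y|
        = 2 * b * |w j| * (c * rexp (-(1/(4*mu*t)) * ‖w‖^2)) * |g y| := by
      rw [abs_mul, abs_mul, abs_of_nonneg (by positivity : (0:ℝ) ≤ c * rexp _)]
      congr 1
      rw [abs_mul]
      congr 1
      rw [abs_of_nonpos (by nlinarith : (-2) * b ≤ 0)]
      ring
    rw [key]
    have step1 : 2 * b * |w j| * (c * rexp (-(1/(4*mu*t)) * ‖w‖^2)) * |g y|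
        ≤ 2 * b * (‖z‖ + S) * (c * (rexp (b*S^2) * rexp (-(b/2) * ‖z‖^2))) * C := by
      gcongr
    refine step1.trans ?_
    have hq : ‖z‖ + S ≤ (1 + S) * (1 + ‖z‖) ^ 2 := by nlinarith [norm_nonneg z, sq_nonneg ‖z‖]
    calc 2 * b * (‖z‖ + S) * (c * (rexp (b*S^2) * rexp (-(b/2) * ‖z‖^2))) * C
        = (2 * b * c * C * rexp (b*S^2)) * ((‖z‖ + S) * rexp (-(b/2) * ‖z‖^2)) := by ring
      _ ≤ (2 * b * c * C * rexp (b*S^2)) * (((1 + S) * (1 + ‖z‖) ^ 2) * rexp (-(b/2) * ‖z‖^2)) := by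
        gcongr
      _ = (2*b*c*C*(1+S)*rexp (b*S^2)) * ((1 + ‖z‖) ^ 2 * rexp (-(b/2) * ‖z‖^2)) := by ring
  · -- differentiability
    have hrw : ∀ s : ℝ, x + s • EuclideanSpace.single j (1:ℝ) - y
        = (x - y) + s • EuclideanSpace.single j (1:ℝ) := fun s => by abel
    beta_reduce
    simp only [hrw]
    exact (hasDerivAt_heatKernel_dir hmu ht (x - y) j s).mul_const (g y)

set_option maxHeartbeats 1000000 in
/-- Integrability of the first-derivative integrand. -/
lemma integrable_F1 (x : EuclideanSpace ℝ (Fin n)) (j : Fin n) (s₀ : ℝ) :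
    Integrable (fun y => (-2 * (1 / (4 * mu * t))
        * ((x + s₀ • EuclideanSpace.single j (1:ℝ) - y) j)
        * heatKernel mu n (x + s₀ • EuclideanSpace.single j (1:ℝ) - y) t) * g y) := by
  have hb : (0:ℝ) < 1 / (4 * mu * t) := by positivity
  set b : ℝ := 1 / (4 * mu * t) with hbdef
  have hc : (0:ℝ) < (4 * π * mu * t) ^ (-(n : ℝ) / 2) :=
    Real.rpow_pos_of_pos (by positivity) _
  set c : ℝ := (4 * π * mu * t) ^ (-(n : ℝ) / 2) with hcdef
  set S : ℝ := |s₀| with hSdef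
  have hS : 0 ≤ S := abs_nonneg _
  refine integrable_master (M := 2*b*c*C*(1+S)*rexp (b*S^2)) (a := b/2) ?_ (half_pos hb) x
    (fun y => ?_)
  · refine Continuous.aestronglyMeasurable ?_
    refine Continuous.mul (Continuous.mul (Continuous.mul continuous_const ?_) ?_) hg_cont
    · exact (EuclideanSpace.proj j).continuous.comp (continuous_const.sub continuous_id)
    · exact (heatKernel_continuous mu t).comp (continuous_const.sub continuous_id)
  · have hsS : |s₀| ≤ S := le_refl _
    have hrw : x + s₀ • EuclideanSpace.single j (1:ℝ) - y
        = (x - y) + s₀ • EuclideanSpace.single j (1:ℝ) := by abel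
    set z := x - y with hzdef
    set w := z + s₀ • EuclideanSpace.single j (1:ℝ) with hwdef
    rw [hrw, heatKernel_eq]
    have h1 : |w j| ≤ ‖z‖ + S := (abs_apply_le_norm w j).trans (norm_add_smul_single_le z j hsS)
    have h2 : rexp (-(1/(4*mu*t)) * ‖w‖^2) ≤ rexp (b*S^2) * rexp (-(b/2) * ‖z‖^2) := by
      rw [← hbdef]; exact exp_shift_bound hb.le z j hsS
    have h3 : |g y| ≤ C := hC y
    have key : |(-2 * b * (w j) * (c * rexp (-(1/(4*mu*t)) * ‖w‖^2))) * g y|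
        = 2 * b * |w j| * (c * rexp (-(1/(4*mu*t)) * ‖w‖^2)) * |g y| := by
      rw [abs_mul, abs_mul, abs_of_nonneg (by positivity : (0:ℝ) ≤ c * rexp _)]
      congr 1
      rw [abs_mul]
      congr 1
      rw [abs_of_nonpos (by nlinarith : (-2) * b ≤ 0)]
      ring
    rw [key]
    have step1 : 2 * b * |w j| * (c * rexp (-(1/(4*mu*t)) * ‖w‖^2)) * |g y|
        ≤ 2 * b * (‖z‖ + S) * (c * (rexp (b*S^2) * rexp (-(b/2) * ‖z‖^2))) * C := by
      gcongr
    refine step1.trans ?_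
    have hq : ‖z‖ + S ≤ (1 + S) * (1 + ‖z‖) ^ 2 := by nlinarith [norm_nonneg z, sq_nonneg ‖z‖]
    calc 2 * b * (‖z‖ + S) * (c * (rexp (b*S^2) * rexp (-(b/2) * ‖z‖^2))) * C
        = (2 * b * c * C * rexp (b*S^2)) * ((‖z‖ + S) * rexp (-(b/2) * ‖z‖^2)) := by ring
      _ ≤ (2 * b * c * C * rexp (b*S^2)) * (((1 + S) * (1 + ‖z‖) ^ 2) * rexp (-(b/2) * ‖z‖^2)) := by
        gcongr
      _ = (2*b*c*C*(1+S)*rexp (b*S^2)) * ((1 + ‖z‖) ^ 2 * rexp (-(b/2) * ‖z‖^2)) := by ring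

set_option maxHeartbeats 1000000 in
/-- Second differentiation under the integral sign, in a coordinate direction. -/
lemma hasDerivAt_int_dir2 (x : EuclideanSpace ℝ (Fin n)) (j : Fin n) (s₀ : ℝ) :
    Integrable (fun y => ((4 * (1 / (4 * mu * t)) ^ 2
          * ((x + s₀ • EuclideanSpace.single j (1:ℝ) - y) j) ^ 2 - 2 * (1 / (4 * mu * t)))
          * heatKernel mu n (x + s₀ • EuclideanSpace.single j (1:ℝ) - y) t) * g y) ∧
    HasDerivAt
      (fun s : ℝ => ∫ y, (-2 * (1 / (4 * mu * t))
          * ((x + s • EuclideanSpace.single j (1:ℝ) - y) j)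
          * heatKernel mu n (x + s • EuclideanSpace.single j (1:ℝ) - y) t) * g y)
      (∫ y, ((4 * (1 / (4 * mu * t)) ^ 2
          * ((x + s₀ • EuclideanSpace.single j (1:ℝ) - y) j) ^ 2 - 2 * (1 / (4 * mu * t)))
          * heatKernel mu n (x + s₀ • EuclideanSpace.single j (1:ℝ) - y) t) * g y) s₀ := by
  have hb : (0:ℝ) < 1 / (4 * mu * t) := by positivity
  set b : ℝ := 1 / (4 * mu * t) with hbdef
  have hc : (0:ℝ) < (4 * π * mu * t) ^ (-(n : ℝ) / 2) :=
    Real.rpow_pos_of_pos (by positivity) _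
  set c : ℝ := (4 * π * mu * t) ^ (-(n : ℝ) / 2) with hcdef
  set S : ℝ := |s₀| + 1 with hSdef
  have hS : 0 ≤ S := by positivity
  have contF' : ∀ s : ℝ, Continuous fun y : EuclideanSpace ℝ (Fin n) =>
      ((4 * b ^ 2 * ((x + s • EuclideanSpace.single j (1:ℝ) - y) j) ^ 2 - 2 * b)
        * heatKernel mu n (x + s • EuclideanSpace.single j (1:ℝ) - y) t) * g y := by
    intro s
    refine Continuous.mul (Continuous.mul (Continuous.sub (Continuous.mul continuous_const
      (Continuous.pow ?_ 2)) continuous_const) ?_) hg_cont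
    · exact (EuclideanSpace.proj j).continuous.comp (continuous_const.sub continuous_id)
    · exact (heatKernel_continuous mu t).comp (continuous_const.sub continuous_id)
  refine hasDerivAt_integral_of_dominated_loc_of_deriv_le
    (F := fun (s : ℝ) (y : EuclideanSpace ℝ (Fin n)) =>
      (-2 * b * ((x + s • EuclideanSpace.single j (1:ℝ) - y) j)
          * heatKernel mu n (x + s • EuclideanSpace.single j (1:ℝ) - y) t) * g y)
    (F' := fun (s : ℝ) (y : EuclideanSpace ℝ (Fin n)) =>
      ((4 * b ^ 2 * ((x + s • EuclideanSpace.single j (1:ℝ) - y) j) ^ 2 - 2 * b)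
          * heatKernel mu n (x + s • EuclideanSpace.single j (1:ℝ) - y) t) * g y)
    (bound := fun y => ((4*b^2*(1+S)^2 + 2*b)*c*C*rexp (b*S^2))
      * ((1 + ‖x - y‖) ^ 2 * rexp (-((1/(4*mu*t))/2) * ‖x - y‖ ^ 2)))
    (Metric.ball_mem_nhds s₀ one_pos)
    (Filter.Eventually.of_forall (fun s => ?_))
    (integrable_F1 hmu ht hg_cont hC0 hC x j s₀)
    (contF' s₀).aestronglyMeasurable
    (Filter.Eventually.of_forall (fun y => fun s hs => ?_))
    (integrable_master_bound (half_pos hb) ((4*b^2*(1+S)^2 + 2*b)*c*C*rexp (b*S^2)) x)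
    (Filter.Eventually.of_forall (fun y => fun s _ => ?_))
  · refine Continuous.aestronglyMeasurable ?_
    refine Continuous.mul (Continuous.mul (Continuous.mul continuous_const ?_) ?_) hg_cont
    · exact (EuclideanSpace.proj j).continuous.comp (continuous_const.sub continuous_id)
    · exact (heatKernel_continuous mu t).comp (continuous_const.sub continuous_id)
  · -- the bound
    have hsS : |s| ≤ S := by
      have := Metric.mem_ball.1 hs
      rw [Real.dist_eq] at this
      have h2 := abs_sub_abs_le_abs_sub s s₀
      rw [hSdef]; linarith
    have hrw : x + s • EuclideanSpace.single j (1:ℝ) - y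
        = (x - y) + s • EuclideanSpace.single j (1:ℝ) := by abel
    set z := x - y with hzdef
    set w := z + s • EuclideanSpace.single j (1:ℝ) with hwdef
    beta_reduce
    rw [Real.norm_eq_abs, hrw, heatKernel_eq]
    have h1 : |w j| ≤ ‖z‖ + S := (abs_apply_le_norm w j).trans (norm_add_smul_single_le z j hsS)
    have h2 : rexp (-(1/(4*mu*t)) * ‖w‖^2) ≤ rexp (b*S^2) * rexp (-(b/2) * ‖z‖^2) := by
      rw [← hbdef]; exact exp_shift_bound hb.le z j hsS
    have h3 : |g y| ≤ C := hC y
    have habs : |4 * b ^ 2 * (w j) ^ 2 - 2 * b|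
        ≤ (4 * b ^ 2 * (1+S)^2 + 2 * b) * (1 + ‖z‖) ^ 2 := by
      have h4 : (w j) ^ 2 ≤ (‖z‖ + S) ^ 2 := by
        rw [← sq_abs (w j)]
        exact pow_le_pow_left₀ (abs_nonneg _) h1 2
      have h5 : (‖z‖ + S) ^ 2 ≤ (1+S)^2 * (1 + ‖z‖) ^ 2 := by
        rw [← mul_pow]
        refine pow_le_pow_left₀ (by positivity) ?_ 2
        nlinarith [norm_nonneg z]
      have h6 : (1:ℝ) ≤ (1 + ‖z‖) ^ 2 := by nlinarith [norm_nonneg z]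
      have hA := mul_le_mul_of_nonneg_left (h4.trans h5) (by positivity : (0:ℝ) ≤ 4*b^2)
      have hB := mul_le_mul_of_nonneg_left h6 (by positivity : (0:ℝ) ≤ 2*b)
      rw [abs_sub_comm]
      refine (abs_sub _ _).trans ?_
      rw [abs_of_nonneg (by positivity : (0:ℝ) ≤ 2*b),
        abs_of_nonneg (by positivity : (0:ℝ) ≤ 4*b^2*(w j)^2)]
      nlinarith [hA, hB]
    have key : |((4 * b ^ 2 * (w j) ^ 2 - 2 * b) * (c * rexp (-(1/(4*mu*t)) * ‖w‖^2))) * g y|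
        = |4 * b ^ 2 * (w j) ^ 2 - 2 * b| * (c * rexp (-(1/(4*mu*t)) * ‖w‖^2)) * |g y| := by
      rw [abs_mul, abs_mul, abs_of_nonneg (by positivity : (0:ℝ) ≤ c * rexp _)]
    rw [key]
    calc |4 * b ^ 2 * (w j) ^ 2 - 2 * b| * (c * rexp (-(1/(4*mu*t)) * ‖w‖^2)) * |g y|
        ≤ ((4 * b ^ 2 * (1+S)^2 + 2 * b) * (1 + ‖z‖) ^ 2)
            * (c * (rexp (b*S^2) * rexp (-(b/2) * ‖z‖^2))) * C := by gcongr
      _ = ((4*b^2*(1+S)^2 + 2*b)*c*C*rexp (b*S^2))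
            * ((1 + ‖z‖) ^ 2 * rexp (-(b/2) * ‖z‖^2)) := by ring
  · -- differentiability
    have hrw : ∀ s : ℝ, x + s • EuclideanSpace.single j (1:ℝ) - y
        = (x - y) + s • EuclideanSpace.single j (1:ℝ) := fun s => by abel
    beta_reduce
    simp only [hrw]
    exact (hasDerivAt_heatKernel_dir2 hmu ht (x - y) j s).mul_const (g y)

set_option maxHeartbeats 1000000 in
/-- Differentiation under the integral sign in time. -/
lemma hasDerivAt_int_time (x : EuclideanSpace ℝ (Fin n)) :
    HasDerivAt (fun t' : ℝ => ∫ y, heatKernel mu n (x - y) t' * g y)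
      (∫ y, ((-(n : ℝ) / 2 / t + ‖x - y‖ ^ 2 / (4 * mu * t ^ 2))
          * heatKernel mu n (x - y) t) * g y) t := by
  have hp : (-(n : ℝ) / 2) ≤ 0 := by
    have : (0:ℝ) ≤ (n : ℝ) / 2 := by positivity
    linarith
  have contF' : ∀ t'' : ℝ, Continuous fun y : EuclideanSpace ℝ (Fin n) =>
      ((-(n : ℝ) / 2 / t'' + ‖x - y‖ ^ 2 / (4 * mu * t'' ^ 2))
        * heatKernel mu n (x - y) t'') * g y := by
    intro t''
    refine Continuous.mul (Continuous.mul (Continuous.add continuous_const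
      (Continuous.div_const (Continuous.pow (Continuous.norm
        (continuous_const.sub continuous_id)) 2) _)) ?_) hg_cont
    exact (heatKernel_continuous mu t'').comp (continuous_const.sub continuous_id)
  refine (hasDerivAt_integral_of_dominated_loc_of_deriv_le
    (F := fun (t' : ℝ) (y : EuclideanSpace ℝ (Fin n)) => heatKernel mu n (x - y) t' * g y)
    (F' := fun (t' : ℝ) (y : EuclideanSpace ℝ (Fin n)) =>
      ((-(n : ℝ) / 2 / t' + ‖x - y‖ ^ 2 / (4 * mu * t' ^ 2))
          * heatKernel mu n (x - y) t') * g y)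
    (bound := fun y => (((n:ℝ)/t + 1/(mu*t^2)) * (2*π*mu*t) ^ (-(n : ℝ) / 2) * C)
      * ((1 + ‖x - y‖) ^ 2 * rexp (-(1/(6*mu*t)) * ‖x - y‖ ^ 2)))
    (Metric.ball_mem_nhds t (half_pos ht))
    (Filter.Eventually.of_forall (fun t' => ?_))
    (integrable_F hmu ht hg_cont hC0 hC x)
    (contF' t).aestronglyMeasurable
    (Filter.Eventually.of_forall (fun y => fun t' ht' => ?_))
    (integrable_master_bound (by positivity)
      (((n:ℝ)/t + 1/(mu*t^2)) * (2*π*mu*t) ^ (-(n : ℝ) / 2) * C) x)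
    (Filter.Eventually.of_forall (fun y => fun t' ht' => ?_))).2
  · exact (((heatKernel_continuous mu t').comp (continuous_const.sub continuous_id)).mul
      hg_cont).aestronglyMeasurable
  · -- the bound
    have hmem := Metric.mem_ball.1 ht'
    rw [Real.dist_eq] at hmem
    obtain ⟨hm1, hm2⟩ := abs_lt.1 hmem
    have hlo : t/2 < t' := by linarith
    have hhi : t' < 3*t/2 := by linarith
    have ht'0 : 0 < t' := lt_trans (half_pos ht) hlo
    set z := x - y with hzdef
    set q := ‖z‖ ^ 2 with hqdef
    have hq0 : 0 ≤ q := sq_nonneg _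
    beta_reduce
    rw [Real.norm_eq_abs, heatKernel_eq]
    have h3 : |g y| ≤ C := hC y
    have habs : |(-(n : ℝ) / 2 / t' + q / (4 * mu * t' ^ 2))|
        ≤ ((n:ℝ)/t + 1/(mu*t^2)) * (1 + ‖z‖) ^ 2 := by
      have e1 : (n:ℝ) / 2 / t' ≤ (n:ℝ) / t := by
        rw [div_div, div_le_div_iff₀ (by positivity) (by positivity)]
        nlinarith [mul_le_mul_of_nonneg_left (show t ≤ 2*t' by linarith)
          (show (0:ℝ) ≤ (n:ℝ)/2 by positivity)]
      have e2 : q / (4 * mu * t' ^ 2) ≤ q / (mu * t ^ 2) := by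
        rw [div_le_div_iff₀ (by positivity) (by positivity)]
        have h9 : t^2 ≤ 4*t'^2 := by
          nlinarith [sq_nonneg (2*t' - t), mul_lt_mul_of_pos_left hlo ht]
        nlinarith [mul_le_mul_of_nonneg_left
          (mul_le_mul_of_nonneg_left h9 hmu.le) hq0]
      have e3 : |(-(n : ℝ) / 2 / t' + q / (4 * mu * t' ^ 2))|
          ≤ (n:ℝ) / 2 / t' + q / (4 * mu * t' ^ 2) := by
        have p1 : (0:ℝ) ≤ (n:ℝ) / 2 / t' := by positivity
        have p2 : (0:ℝ) ≤ q / (4 * mu * t' ^ 2) := by positivity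
        have hrwn : -(n : ℝ) / 2 / t' = -((n : ℝ) / 2 / t') := by ring
        rw [hrwn]
        refine (abs_add_le _ _).trans ?_
        rw [abs_neg, abs_of_nonneg p1, abs_of_nonneg p2]
      have e4 : (1:ℝ) ≤ (1 + ‖z‖) ^ 2 := by nlinarith [norm_nonneg z]
      have e5 : q ≤ (1 + ‖z‖) ^ 2 := by nlinarith [norm_nonneg z]
      have e6 : (0:ℝ) ≤ (n:ℝ)/t := by positivity
      have e7 : (0:ℝ) ≤ 1/(mu*t^2) := by positivity
      have e8 : q / (mu * t ^ 2) = (1/(mu*t^2)) * q := by ring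
      have hA := mul_le_mul_of_nonneg_left e4 e6
      have hB := mul_le_mul_of_nonneg_left e5 e7
      calc |(-(n : ℝ) / 2 / t' + q / (4 * mu * t' ^ 2))|
          ≤ (n:ℝ) / t + q / (mu * t ^ 2) := by linarith
        _ ≤ ((n:ℝ)/t + 1/(mu*t^2)) * (1 + ‖z‖) ^ 2 := by rw [e8] at *; nlinarith
    have hK : (4 * π * mu * t') ^ (-(n : ℝ) / 2) * rexp (-(1 / (4 * mu * t')) * q)
        ≤ (2*π*mu*t) ^ (-(n : ℝ) / 2) * rexp (-(1/(6*mu*t)) * q) := by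
      refine mul_le_mul ?_ ?_ (Real.exp_nonneg _) (Real.rpow_nonneg (by positivity) _)
      · refine Real.rpow_le_rpow_of_nonpos (by positivity) (by
          nlinarith [mul_le_mul_of_nonneg_left (show t ≤ 2*t' by linarith)
            (show (0:ℝ) ≤ 2*π*mu by positivity)]) hp
      · apply Real.exp_le_exp.2
        have h9 : 4*mu*t' ≤ 6*mu*t := by
          nlinarith [mul_le_mul_of_nonneg_left (show 2*t' ≤ 3*t by linarith) hmu.le]
        have h10 : 1/(6*mu*t) ≤ 1/(4*mu*t') := one_div_le_one_div_of_le (by positivity) h9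
        nlinarith [mul_le_mul_of_nonneg_right h10 hq0]
    have key : |(-(n : ℝ) / 2 / t' + q / (4 * mu * t' ^ 2))
          * ((4 * π * mu * t') ^ (-(n : ℝ) / 2) * rexp (-(1 / (4 * mu * t')) * q)) * g y|
        = |(-(n : ℝ) / 2 / t' + q / (4 * mu * t' ^ 2))|
          * ((4 * π * mu * t') ^ (-(n : ℝ) / 2) * rexp (-(1 / (4 * mu * t')) * q)) * |g y| := by
      have hpos : (0:ℝ) < (4 * π * mu * t') ^ (-(n : ℝ) / 2) :=
        Real.rpow_pos_of_pos (by positivity) _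
      rw [abs_mul, abs_mul, abs_of_nonneg (by positivity : (0:ℝ) ≤ _ * rexp _)]
    rw [key]
    calc |(-(n : ℝ) / 2 / t' + q / (4 * mu * t' ^ 2))|
          * ((4 * π * mu * t') ^ (-(n : ℝ) / 2) * rexp (-(1 / (4 * mu * t')) * q)) * |g y|
        ≤ (((n:ℝ)/t + 1/(mu*t^2)) * (1 + ‖z‖) ^ 2)
          * ((2*π*mu*t) ^ (-(n : ℝ) / 2) * rexp (-(1/(6*mu*t)) * q)) * C := by
          refine mul_le_mul (mul_le_mul habs hK (by positivity) (by positivity)) h3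
            (abs_nonneg _) ?_
          have : (0:ℝ) < (2*π*mu*t) ^ (-(n : ℝ) / 2) := Real.rpow_pos_of_pos (by positivity) _
          positivity
      _ = (((n:ℝ)/t + 1/(mu*t^2)) * (2*π*mu*t) ^ (-(n : ℝ) / 2) * C)
          * ((1 + ‖z‖) ^ 2 * rexp (-(1/(6*mu*t)) * q)) := by ring
  · -- differentiability
    have hmem := Metric.mem_ball.1 ht'
    rw [Real.dist_eq] at hmem
    obtain ⟨hm1, hm2⟩ := abs_lt.1 hmem
    have hlo : t/2 < t' := by linarith
    have ht'0 : 0 < t' := lt_trans (half_pos ht) hlo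
    exact (hasDerivAt_heatKernel_time hmu (x - y) ht'0).mul_const (g y)

end Main


lemma integrable_heatKernel {mu t : ℝ} (hmu : 0 < mu) (ht : 0 < t)
    (x : EuclideanSpace ℝ (Fin n)) :
    Integrable (fun y : EuclideanSpace ℝ (Fin n) => heatKernel mu n (x - y) t) := by
  have hb : (0:ℝ) < 1/(4*mu*t) := by positivity
  have h : Integrable (fun z : EuclideanSpace ℝ (Fin n) => heatKernel mu n z t) := by
    refine ((integrable_gauss hb).const_mul ((4*π*mu*t) ^ (-(n:ℝ)/2))).congr
      (Filter.Eventually.of_forall fun z => ?_)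
    exact (heatKernel_eq mu z t).symm
  exact h.comp_sub_left x

lemma integral_heatKernel_one {mu t : ℝ} (hmu : 0 < mu) (ht : 0 < t) :
    ∫ z : EuclideanSpace ℝ (Fin n), heatKernel mu n z t = 1 := by
  have hb : (0:ℝ) < 1/(4*mu*t) := by positivity
  simp only [heatKernel_eq]
  rw [MeasureTheory.integral_const_mul, integral_gauss hb]
  have h1 : π / (1/(4*mu*t)) = 4*π*mu*t := by
    field_simp
  rw [h1, neg_div, ← Real.rpow_add (by positivity)]
  norm_num

end HeatAux

set_option maxHeartbeats 2000000 in
/-- if `g` is bounded and continuous on `ℝⁿ` and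
`u(x,t) = ∫_{ℝⁿ} Φ_μ(x − y, t) g(y) dy`, then (i) for every `x ∈ ℝⁿ` and `t > 0`,
`∂_t u(x,t) = μ Δu(x,t)`, and (ii) for every `x ∈ ℝⁿ`, `u(x,t) → g(x)` as `t → 0⁺`. -/
theorem heat_semigroup_solves_heat_equation_and_attains_initial_data (n : ℕ) (hn : 1 ≤ n)
    (μ : ℝ) (hμ : 0 < μ) (g : EuclideanSpace ℝ (Fin n) → ℝ)
    (hg_cont : Continuous g) (hg_bdd : ∃ C : ℝ, ∀ x, |g x| ≤ C)
    (u : EuclideanSpace ℝ (Fin n) → ℝ → ℝ)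
    (hu : ∀ (x : EuclideanSpace ℝ (Fin n)) (t : ℝ),
      u x t = ∫ y, heatKernel μ n (x - y) t * g y) :
    (∀ (x : EuclideanSpace ℝ (Fin n)) (t : ℝ), 0 < t →
      deriv (fun s : ℝ => u x s) t = μ * laplacianR n (fun y => u y t) x) ∧
    (∀ x : EuclideanSpace ℝ (Fin n),
      Tendsto (fun t : ℝ => u x t) (nhdsWithin 0 (Set.Ioi 0)) (nhds (g x))) := by
  obtain ⟨C, hC⟩ := hg_bdd
  have hC0 : 0 ≤ C := (abs_nonneg _).trans (hC 0)
  constructor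
  · -- part (i)
    intro x t ht
    have hμt : μ ≠ 0 := ne_of_gt hμ
    have htne : t ≠ 0 := ne_of_gt ht
    have hL : deriv (fun s : ℝ => u x s) t
        = ∫ y, ((-(n : ℝ)/2/t + ‖x - y‖^2/(4*μ*t^2)) * heatKernel μ n (x - y) t) * g y := by
      have hLfun : (fun s : ℝ => u x s) = fun s => ∫ y, heatKernel μ n (x - y) s * g y :=
        funext fun s => hu x s
      rw [hLfun]
      exact (HeatAux.hasDerivAt_int_time hμ ht hg_cont hC0 hC x).deriv
    have hR : ∀ j : Fin n,
        iteratedDeriv 2 (fun s : ℝ => u (x + s • EuclideanSpace.single j (1:ℝ)) t) 0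
        = ∫ y, ((4*(1/(4*μ*t))^2 * ((x + (0:ℝ) • EuclideanSpace.single j (1:ℝ) - y) j)^2
            - 2*(1/(4*μ*t)))
            * heatKernel μ n (x + (0:ℝ) • EuclideanSpace.single j (1:ℝ) - y) t) * g y := by
      intro j
      have hfun : (fun s : ℝ => u (x + s • EuclideanSpace.single j (1:ℝ)) t)
          = fun s => ∫ y, heatKernel μ n (x + s • EuclideanSpace.single j (1:ℝ) - y) t * g y :=
        funext fun s => hu _ t
      rw [hfun, iteratedDeriv_succ, iteratedDeriv_one]
      have hd1 : deriv (fun s : ℝ =>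
            ∫ y, heatKernel μ n (x + s • EuclideanSpace.single j (1:ℝ) - y) t * g y)
          = fun s => ∫ y, (-2 * (1/(4*μ*t)) * ((x + s • EuclideanSpace.single j (1:ℝ) - y) j)
              * heatKernel μ n (x + s • EuclideanSpace.single j (1:ℝ) - y) t) * g y :=
        funext fun s => (HeatAux.hasDerivAt_int_dir hμ ht hg_cont hC0 hC x j s).deriv
      rw [hd1]
      exact (HeatAux.hasDerivAt_int_dir2 hμ ht hg_cont hC0 hC x j 0).2.deriv
    rw [hL]
    simp only [laplacianR]
    rw [Finset.sum_congr rfl (fun j _ => hR j), Finset.mul_sum]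
    have hint2 : ∀ j : Fin n, Integrable (fun y =>
        μ * (((4*(1/(4*μ*t))^2 * ((x + (0:ℝ) • EuclideanSpace.single j (1:ℝ) - y) j)^2
          - 2*(1/(4*μ*t)))
          * heatKernel μ n (x + (0:ℝ) • EuclideanSpace.single j (1:ℝ) - y) t) * g y)) :=
      fun j => ((HeatAux.hasDerivAt_int_dir2 hμ ht hg_cont hC0 hC x j 0).1).const_mul μ
    have hsum : ∑ j : Fin n, μ * (∫ y, ((4*(1/(4*μ*t))^2
          * ((x + (0:ℝ) • EuclideanSpace.single j (1:ℝ) - y) j)^2 - 2*(1/(4*μ*t)))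
          * heatKernel μ n (x + (0:ℝ) • EuclideanSpace.single j (1:ℝ) - y) t) * g y)
        = ∫ y, ∑ j : Fin n, μ * (((4*(1/(4*μ*t))^2
          * ((x + (0:ℝ) • EuclideanSpace.single j (1:ℝ) - y) j)^2 - 2*(1/(4*μ*t)))
          * heatKernel μ n (x + (0:ℝ) • EuclideanSpace.single j (1:ℝ) - y) t) * g y) := by
      rw [integral_finset_sum _ (fun j _ => hint2 j)]
      exact Finset.sum_congr rfl fun j _ => (MeasureTheory.integral_const_mul μ _).symm
    rw [hsum]
    refine integral_congr_ae (Filter.Eventually.of_forall fun y => ?_)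
    simp only [zero_smul, add_zero]
    have hz := HeatAux.norm_sq_eq_sum (x - y)
    calc ((-(n : ℝ)/2/t + ‖x - y‖^2/(4*μ*t^2)) * heatKernel μ n (x - y) t) * g y
        = (4*(1/(4*μ*t))^2 * ‖x - y‖^2 - (n : ℝ) * (2*(1/(4*μ*t))))
            * (μ * (heatKernel μ n (x - y) t * g y)) := by
          field_simp
          ring
      _ = (∑ j : Fin n, (4*(1/(4*μ*t))^2 * ((x - y) j)^2 - 2*(1/(4*μ*t))))
            * (μ * (heatKernel μ n (x - y) t * g y)) := by
          congr 1
          rw [Finset.sum_sub_distrib, ← Finset.mul_sum, ← hz, Finset.sum_const,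
            Finset.card_univ, Fintype.card_fin, nsmul_eq_mul]
      _ = ∑ j : Fin n, μ * (((4*(1/(4*μ*t))^2 * ((x - y) j)^2 - 2*(1/(4*μ*t)))
            * heatKernel μ n (x - y) t) * g y) := by
          rw [Finset.sum_mul]
          exact Finset.sum_congr rfl fun j _ => by ring
  · -- part (ii)
    intro x
    refine Metric.tendsto_nhds.2 fun ε hε => ?_
    obtain ⟨δ, hδ, hδg⟩ := Metric.continuousAt_iff.1 hg_cont.continuousAt (ε/4) (by positivity)
    set A : ℝ := 2*C*(2:ℝ)^((n:ℝ)/2) with hAdef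
    have h2pow : (0:ℝ) < (2:ℝ)^((n:ℝ)/2) := Real.rpow_pos_of_pos (by norm_num) _
    have hA0 : 0 ≤ A := by positivity
    have hexp : Tendsto (fun t : ℝ => A * rexp (-δ^2/(8*μ) * t⁻¹))
        (nhdsWithin 0 (Set.Ioi 0)) (nhds 0) := by
      have h1 : Tendsto (fun t : ℝ => t⁻¹) (nhdsWithin (0:ℝ) (Set.Ioi 0)) atTop :=
        tendsto_inv_nhdsGT_zero
      have hneg : -δ^2/(8*μ) < 0 := by
        have : (0:ℝ) < δ^2/(8*μ) := by positivity
        rw [neg_div]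
        linarith
      have h2 : Tendsto (fun s : ℝ => -δ^2/(8*μ) * s) atTop atBot :=
        (tendsto_const_mul_atBot_of_neg hneg).2 tendsto_id
      have h3 := Real.tendsto_exp_atBot.comp (h2.comp h1)
      have h4 := h3.const_mul A
      simpa [Function.comp, mul_zero] using h4
    have hev : ∀ᶠ t in nhdsWithin (0:ℝ) (Set.Ioi 0), A * rexp (-δ^2/(8*μ) * t⁻¹) < ε/2 :=
      hexp.eventually_lt_const (by positivity)
    filter_upwards [hev, self_mem_nhdsWithin] with t hevt htmem
    have ht : (0:ℝ) < t := htmem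
    have hb8 : (0:ℝ) < 1/(8*μ*t) := by positivity
    have hcpos : (0:ℝ) < (4*π*μ*t) ^ (-(n:ℝ)/2) := Real.rpow_pos_of_pos (by positivity) _
    set c : ℝ := (4*π*μ*t) ^ (-(n:ℝ)/2) with hcdef
    set D : ℝ := 2*C*c*rexp (-δ^2/(8*μ*t)) with hDdef
    have hD0 : 0 ≤ D := by positivity
    have hKint : Integrable (fun y => heatKernel μ n (x - y) t) :=
      HeatAux.integrable_heatKernel hμ ht x
    have hone : ∫ y, heatKernel μ n (x - y) t = 1 := by
      rw [MeasureTheory.integral_sub_left_eq_self (fun z => heatKernel μ n z t) volume x]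
      exact HeatAux.integral_heatKernel_one hμ ht
    have hdiff : u x t - g x = ∫ y, heatKernel μ n (x - y) t * (g y - g x) := by
      have h1 : Integrable (fun y => heatKernel μ n (x - y) t * g y) :=
        HeatAux.integrable_F hμ ht hg_cont hC0 hC x
      have h2 : Integrable (fun y => heatKernel μ n (x - y) t * g x) := hKint.mul_const _
      have h3 : ∫ y, heatKernel μ n (x - y) t * (g y - g x)
          = (∫ y, heatKernel μ n (x - y) t * g y) - ∫ y, heatKernel μ n (x - y) t * g x := by
        rw [← integral_sub h1 h2]
        refine integral_congr_ae (Filter.Eventually.of_forall fun y => ?_)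
        ring
      rw [hu x t, h3, MeasureTheory.integral_mul_const, hone]
      ring
    have hgauss : Integrable (fun y : EuclideanSpace ℝ (Fin n) =>
        rexp (-(1/(8*μ*t)) * ‖x - y‖^2)) := (HeatAux.integrable_gauss hb8).comp_sub_left x
    have hintbound : Integrable (fun y => ε/4 * heatKernel μ n (x - y) t
        + D * rexp (-(1/(8*μ*t)) * ‖x - y‖^2)) :=
      (hKint.const_mul _).add (hgauss.const_mul D)
    have hbound : ∀ y, ‖heatKernel μ n (x - y) t * (g y - g x)‖
        ≤ ε/4 * heatKernel μ n (x - y) t + D * rexp (-(1/(8*μ*t)) * ‖x - y‖^2) := by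
      intro y
      have hK0 : 0 ≤ heatKernel μ n (x - y) t := HeatAux.heatKernel_nonneg hμ ht _
      have hE0 : 0 ≤ rexp (-(1/(8*μ*t)) * ‖x - y‖^2) := Real.exp_nonneg _
      rw [Real.norm_eq_abs, abs_mul, abs_of_nonneg hK0]
      by_cases hy : dist y x < δ
      · have h5 : |g y - g x| ≤ ε/4 := by
          have h5' := hδg hy
          rw [Real.dist_eq] at h5'
          linarith
        have h5'' := mul_le_mul_of_nonneg_left h5 hK0
        nlinarith [mul_nonneg hD0 hE0]
      · have hdy : δ ≤ dist y x := not_lt.1 hy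
        have h6 : |g y - g x| ≤ 2*C := (abs_sub _ _).trans (by linarith [hC y, hC x])
        have hq : δ^2 ≤ ‖x - y‖^2 := by
          have h7 : dist y x = ‖x - y‖ := by rw [dist_eq_norm, norm_sub_rev]
          rw [← h7]
          exact pow_le_pow_left₀ hδ.le hdy 2
        have hKle : heatKernel μ n (x - y) t
            ≤ c * (rexp (-δ^2/(8*μ*t)) * rexp (-(1/(8*μ*t)) * ‖x - y‖^2)) := by
          rw [HeatAux.heatKernel_eq, ← hcdef, ← Real.exp_add]
          refine mul_le_mul_of_nonneg_left (Real.exp_le_exp.2 ?_) hcpos.le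
          have h48 : (1:ℝ)/(4*μ*t) = 2*(1/(8*μ*t)) := by
            field_simp
            ring
          have h9 : -δ^2/(8*μ*t) = -(δ^2 * (1/(8*μ*t))) := by ring
          rw [h48, h9]
          nlinarith [mul_le_mul_of_nonneg_left hq hb8.le]
        have hεK : 0 ≤ ε/4 * heatKernel μ n (x - y) t := by positivity
        calc heatKernel μ n (x - y) t * |g y - g x|
            ≤ (c * (rexp (-δ^2/(8*μ*t)) * rexp (-(1/(8*μ*t)) * ‖x - y‖^2))) * (2*C) :=
              mul_le_mul hKle h6 (abs_nonneg _) (by positivity)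
          _ = D * rexp (-(1/(8*μ*t)) * ‖x - y‖^2) := by rw [hDdef]; ring
          _ ≤ ε/4 * heatKernel μ n (x - y) t + D * rexp (-(1/(8*μ*t)) * ‖x - y‖^2) := by
              linarith
    have habs : |u x t - g x| ≤ ∫ y, (ε/4 * heatKernel μ n (x - y) t
        + D * rexp (-(1/(8*μ*t)) * ‖x - y‖^2)) := by
      rw [hdiff, ← Real.norm_eq_abs]
      exact norm_integral_le_of_norm_le hintbound (Filter.Eventually.of_forall hbound)
    have hval : ∫ y, (ε/4 * heatKernel μ n (x - y) t
        + D * rexp (-(1/(8*μ*t)) * ‖x - y‖^2)) = ε/4 + A * rexp (-δ^2/(8*μ*t)) := by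
      rw [integral_add (hKint.const_mul _) (hgauss.const_mul D),
        MeasureTheory.integral_const_mul, MeasureTheory.integral_const_mul, hone,
        MeasureTheory.integral_sub_left_eq_self
          (fun z : EuclideanSpace ℝ (Fin n) => rexp (-(1/(8*μ*t)) * ‖z‖^2)) volume x,
        HeatAux.integral_gauss hb8]
      have h10 : π / (1/(8*μ*t)) = 2*(4*π*μ*t) := by
        field_simp
        ring
      have h11 : D * (π / (1/(8*μ*t))) ^ ((n:ℝ)/2) = A * rexp (-δ^2/(8*μ*t)) := by
        rw [h10, Real.mul_rpow (by norm_num) (by positivity), hDdef, hAdef, hcdef]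
        have h12 : (4*π*μ*t) ^ (-(n:ℝ)/2) * (4*π*μ*t) ^ ((n:ℝ)/2) = 1 := by
          rw [neg_div, ← Real.rpow_add (by positivity)]
          norm_num
        linear_combination (2*C*rexp (-δ^2/(8*μ*t))*(2:ℝ)^((n:ℝ)/2)) * h12
      rw [h11]
      ring
    have hfin : A * rexp (-δ^2/(8*μ*t)) < ε/2 := by
      have h13 : -δ^2/(8*μ*t) = -δ^2/(8*μ) * t⁻¹ := by ring
      rw [h13]
      exact hevt
    calc dist (u x t) (g x) = |u x t - g x| := Real.dist_eq _ _
      _ ≤ ε/4 + A * rexp (-δ^2/(8*μ*t)) := by rw [← hval]; exact habs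
      _ < ε/4 + ε/2 := by linarith
      _ < ε := by linarith
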